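/- Simplification Theorem: suppose G^g is covered by H^h (every option of G^g is equivalent to some option of H^h). Then G^g = H^h if and only if (b1) type(G^g) = type(H^h) and (b2) every option H'^{h'} of H^h that is uncovered by G^g (i.e., not equivalent to any option of G^g) has an option H''^{h''} with H''^{h''} = G^g. -/

import Mathlib

inductive AGame : Type where
  | mk : List AGame → Bool → AGame

namespace AGame

noncomputable instance : DecidableEq AGame := Classical.decEq _

def opts : AGame → List AGame | mk gs _ => gs
def act : AGame → Bool | mk _ g => g

theorem sizeOf_lt_of_mem {G G' : AGame} (h : G' ∈ G.opts) : sizeOf G' < sizeOf G := by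
  cases G with
  | mk gs g =>
    simp only [opts] at h
    have := List.sizeOf_lt_of_mem h
    simp [AGame.mk.sizeOf_spec]
    omega

/-- Disjunctive sum of games with activeness. -/
def add (G H : AGame) : AGame :=
  mk (G.opts.attach.map (fun x => add x.1 H) ++
      H.opts.attach.map (fun y => add G y.1)) (G.act || H.act)
termination_by sizeOf G + sizeOf H
decreasing_by
  · have := sizeOf_lt_of_mem x.2; omega
  · have := sizeOf_lt_of_mem y.2; omega

/-- `PPos G` means the outcome of `G` is 𝒫 (second player wins). -/
def PPos (G : AGame) : Prop :=
  G.act = false ∨ ∀ G' ∈ G.opts.attach, ¬ PPos G'.1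
termination_by sizeOf G
decreasing_by
  have := sizeOf_lt_of_mem G'.2; omega

/-- Hereditary set-equality (the paper's ≅). -/
def Identical (G H : AGame) : Prop :=
  G.act = H.act ∧ (∀ G' ∈ G.opts.attach, ∃ H' ∈ H.opts.attach, Identical G'.1 H'.1)
              ∧ (∀ H' ∈ H.opts.attach, ∃ G' ∈ G.opts.attach, Identical G'.1 H'.1)
termination_by sizeOf G + sizeOf H
decreasing_by
  · have := sizeOf_lt_of_mem G'.2; have := sizeOf_lt_of_mem H'.2; omega
  · have := sizeOf_lt_of_mem G'.2; have := sizeOf_lt_of_mem H'.2; omega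

/-- Equivalence of games with activeness: same outcome in every sum. -/
def Equiv (G H : AGame) : Prop := ∀ X : AGame, (PPos (add G X) ↔ PPos (add H X))

end AGame

namespace AGame

/-- Nimbers with activeness: `star γ n ≅ {star γ j : j < n}^{γ n}`. -/
def star (γ : ℕ → Bool) : ℕ → AGame
  | n => mk ((List.range n).attach.map (fun j => star γ j.1)) (γ n)
termination_by n => n
decreasing_by
  have := j.2; simp [List.mem_range] at this; omega

/-- The generalized Grundy set `𝒢^γ(G)`. -/
def GSet (γ : ℕ → Bool) (G : AGame) : Set ℕ := {n | PPos (add G (star γ n))}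

/-- Minimum excludant of a set of naturals. -/
noncomputable def mex (S : Set ℕ) : ℕ := sInf {n | n ∉ S}

/-- Ordinary Grundy value, computed ignoring activeness. -/
noncomputable def grundy (G : AGame) : ℕ :=
  mex {m | ∃ G' ∈ G.opts.attach, grundy G'.1 = m}
termination_by sizeOf G
decreasing_by
  have := sizeOf_lt_of_mem G'.2; omega

/-- The three types of games with activeness. -/
inductive AType : Type where
  | inactive : AType            -- type 0
  | activeSomeInactive : AType  -- type 1_{∃0}
  | activeAllActive : AType     -- type 1_{∀1}

open Classical in
/-- `type(G^g)`. -/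
noncomputable def typ (G : AGame) : AType :=
  if G.act = false then .inactive
  else if ∃ G' ∈ G.opts, G'.act = false then .activeSomeInactive
  else .activeAllActive

/-- Formal birthday `b(G)`. -/
def bday (G : AGame) : ℕ :=
  (G.opts.attach.map (fun G' => bday G'.1 + 1)).foldr max 0
termination_by sizeOf G
decreasing_by
  have := sizeOf_lt_of_mem G'.2; omega

/-- An option `G'` of `G` is reversible if it has an option equivalent to `G`. -/
def Reversible (G G' : AGame) : Prop := ∃ G'' ∈ G'.opts, Equiv G'' G

/-- A canonical game: all options canonical and no option reversible. -/
def Canonical (G : AGame) : Prop :=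
  (∀ G' ∈ G.opts.attach, Canonical G'.1) ∧ (∀ G' ∈ G.opts, ¬ Reversible G G')
termination_by sizeOf G
decreasing_by
  have := sizeOf_lt_of_mem G'.2; omega

/-- A transitive game: all options transitive and options of options are options. -/
def TransGame (G : AGame) : Prop :=
  (∀ G' ∈ G.opts.attach, TransGame G'.1) ∧ (∀ G' ∈ G.opts, ∀ G'' ∈ G'.opts, G'' ∈ G.opts)
termination_by sizeOf G
decreasing_by
  have := sizeOf_lt_of_mem G'.2; omega

/-- `G` is covered by `H` if every option of `G` is equivalent to some option of `H`. -/
def Covered (G H : AGame) : Prop := ∀ G' ∈ G.opts, ∃ H' ∈ H.opts, Equiv G' H'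

/-- The relation `G ⋈ H`. -/
def Bowtie (G H : AGame) : Prop :=
  (∀ G' ∈ G.opts, ¬ Equiv G' H) ∧ (∀ H' ∈ H.opts, ¬ Equiv G H')

/-- The linear chain `∅^{g₀ g₁ … gₙ}`. -/
def chain (g : ℕ → Bool) : ℕ → AGame
  | 0 => mk [] (g 0)
  | n + 1 => mk [chain g n] (g (n + 1))

end AGame
/-!
Equivalence of `G` and `H` is tested against every `X`, by induction on `X`. A move of `H + X`
to an option `H'` covered by `G` is answered as in `G + X`; a move to an uncovered `H'` is answered
by the reversing move to `H'' = G`, and the type condition is exactly what makes `H' + X` active,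
so that this answer is legal.

Conversely, the type is an invariant of equivalence: sums with inactive games built from fully
activated copies `actify` detect the activeness of `G` and of its options. If an uncovered option
`H'` had no option equivalent to `G`, then every option of `G` could be separated from `H'`, and
every option of `H'` from `G`, by an active game; the active game `X` whose options are all these
separators makes both `G + X` and `H' + X` 𝒫-positions, so `H + X`, which can move to `H' + X`,
is not one.
-/

namespace AGame

@[simp] lemma opts_mk (l : List AGame) (b : Bool) : (mk l b).opts = l := rfl

@[simp] lemma act_mk (l : List AGame) (b : Bool) : (mk l b).act = b := rfl

@[elab_as_elim]
theorem induction_on_opts {motive : AGame → Prop} (G : AGame)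
    (ih : ∀ G, (∀ G' ∈ G.opts, motive G') → motive G) : motive G :=
  ih G fun G' _ => induction_on_opts G' ih
termination_by sizeOf G
decreasing_by exact sizeOf_lt_of_mem ‹_›

@[simp] lemma act_add (G H : AGame) : (add G H).act = (G.act || H.act) := by
  rw [add]; rfl

lemma opts_add (G H : AGame) :
    (add G H).opts = G.opts.map (add · H) ++ H.opts.map (add G ·) := by
  rw [add]; simp [opts]

lemma mem_opts_add {G H Y : AGame} :
    Y ∈ (add G H).opts ↔
      (∃ G' ∈ G.opts, add G' H = Y) ∨ ∃ H' ∈ H.opts, add G H' = Y := by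
  simp [opts_add]

lemma add_mem_opts_add_left {G G' : AGame} (h : G' ∈ G.opts) (H : AGame) :
    add G' H ∈ (add G H).opts :=
  mem_opts_add.2 (Or.inl ⟨G', h, rfl⟩)

lemma add_mem_opts_add_right (G : AGame) {H H' : AGame} (h : H' ∈ H.opts) :
    add G H' ∈ (add G H).opts :=
  mem_opts_add.2 (Or.inr ⟨H', h, rfl⟩)

lemma ppos_iff {G : AGame} : PPos G ↔ G.act = false ∨ ∀ G' ∈ G.opts, ¬ PPos G' := by
  rw [PPos]; simp

lemma ppos_of_act_eq_false {G : AGame} (h : G.act = false) : PPos G :=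
  ppos_iff.2 (Or.inl h)

lemma ppos_of_forall_not_ppos {G : AGame} (h : ∀ G' ∈ G.opts, ¬ PPos G') : PPos G :=
  ppos_iff.2 (Or.inr h)

lemma not_ppos_of_mem_opts {G G' : AGame} (hG : G.act = true) (hG' : G' ∈ G.opts)
    (h : PPos G') : ¬ PPos G := by
  rw [ppos_iff]; rintro (hoff | hopts)
  · simp [hG] at hoff
  · exact hopts G' hG' h

lemma ppos_add_of_forall_exists {U X : AGame} (hX : X.act = true)
    (hU : ∀ U' ∈ U.opts, ∃ A ∈ X.opts, PPos (add U' A))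
    (hXU : ∀ A ∈ X.opts, ¬ PPos (add U A)) : PPos (add U X) := by
  refine ppos_of_forall_not_ppos fun Y hY => ?_
  obtain ⟨U', hU', rfl⟩ | ⟨A, hA, rfl⟩ := mem_opts_add.1 hY
  · obtain ⟨A, hA, hP⟩ := hU U' hU'
    exact not_ppos_of_mem_opts (by simp [hX]) (add_mem_opts_add_right U' hA) hP
  · exact hXU A hA

lemma Equiv.symm {G H : AGame} (h : Equiv G H) : Equiv H G := fun X => (h X).symm

def actify (G : AGame) : AGame := mk (G.opts.attach.map fun G' => actify G'.1) true
termination_by sizeOf G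
decreasing_by exact sizeOf_lt_of_mem G'.2

@[simp] lemma act_actify (G : AGame) : (actify G).act = true := by
  rw [actify]; rfl

@[simp] lemma opts_actify (G : AGame) : (actify G).opts = G.opts.map actify := by
  rw [actify]; simp [opts]

lemma ppos_add_actify (G : AGame) : PPos (add G (actify G)) := by
  induction G using induction_on_opts with
  | ih G ih =>
    refine ppos_add_of_forall_exists (act_actify G)
      (fun G' hG' => ⟨actify G', by simpa using List.mem_map_of_mem hG', ih G' hG'⟩) ?_
    simp only [opts_actify, List.mem_map]
    rintro _ ⟨G', hG', rfl⟩
    exact not_ppos_of_mem_opts (by simp) (add_mem_opts_add_left hG' _) (ih G' hG')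

lemma Equiv.act_eq {G H : AGame} (h : Equiv G H) : G.act = H.act := by
  suffices key : ∀ {G H : AGame}, Equiv G H → G.act = true → H.act = true from
    Bool.eq_iff_iff.2 ⟨key h, key h.symm⟩
  intro G H h hG
  by_contra hH
  let X := mk [actify G] false
  have hGX : ¬ PPos (add G X) :=
    not_ppos_of_mem_opts (by simp [hG]) (add_mem_opts_add_right G (by simp [X]))
      (ppos_add_actify G)
  exact hGX ((h X).2 (ppos_of_act_eq_false (by simpa [X] using hH)))

lemma Equiv.exists_inactive {G H : AGame} (h : Equiv G H) (hG : G.act = true)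
    (hH : H.act = true) (hex : ∃ G' ∈ G.opts, G'.act = false) :
    ∃ H' ∈ H.opts, H'.act = false := by
  by_contra! hall
  obtain ⟨G₀, hG₀, hG₀off⟩ := hex
  -- Every move in `H + X` stays active and is answered by a move to some `H' + actify H'`.
  let X := mk (H.opts.map actify) false
  have hHX : PPos (add H X) := by
    refine ppos_of_forall_not_ppos fun Y hY => ?_
    obtain ⟨H', hH', rfl⟩ | ⟨A, hA, rfl⟩ := mem_opts_add.1 hY
    · exact not_ppos_of_mem_opts (by simp [hall H' hH'])
        (add_mem_opts_add_right H' (by simpa [X] using List.mem_map_of_mem hH'))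
        (ppos_add_actify H')
    · obtain ⟨H', hH', rfl⟩ := List.mem_map.1 hA
      exact not_ppos_of_mem_opts (by simp [hH]) (add_mem_opts_add_left hH' _)
        (ppos_add_actify H')
  have hGX : ¬ PPos (add G X) :=
    not_ppos_of_mem_opts (by simp [hG]) (add_mem_opts_add_left hG₀ X)
      (ppos_of_act_eq_false (by simp [X, hG₀off]))
  exact hGX ((h X).2 hHX)

lemma typ_eq_iff {G H : AGame} : typ G = typ H ↔ G.act = H.act ∧
      (G.act = true →
        ((∃ G' ∈ G.opts, G'.act = false) ↔ ∃ H' ∈ H.opts, H'.act = false)) := by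
  unfold typ; split_ifs <;> grind

lemma Equiv.typ_eq {G H : AGame} (h : Equiv G H) : typ G = typ H := by
  refine typ_eq_iff.2 ⟨h.act_eq, fun hG => ?_⟩
  have hH : H.act = true := h.act_eq ▸ hG
  exact ⟨h.exists_inactive hG hH, h.symm.exists_inactive hH hG⟩

lemma exists_active_of_ppos_add {U V Z : AGame} (hV : PPos (add V Z))
    (hU : ¬ PPos (add U Z)) :
    ∃ A : AGame, A.act = true ∧ PPos (add U A) ∧ ¬ PPos (add V A) := by
  let A := mk (U.opts.map actify ++ [Z]) true
  refine ⟨A, rfl, ppos_add_of_forall_exists rfl ?_ ?_,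
    not_ppos_of_mem_opts (by simp [A]) (add_mem_opts_add_right V (by simp [A])) hV⟩
  · exact fun U' hU' => ⟨actify U', by simpa [A] using Or.inl (List.mem_map_of_mem hU'),
      ppos_add_actify U'⟩
  · simp only [A, opts_mk, List.mem_append, List.mem_map, List.mem_singleton]
    rintro _ (⟨U', hU', rfl⟩ | rfl)
    · exact not_ppos_of_mem_opts (by simp) (add_mem_opts_add_left hU' _) (ppos_add_actify U')
    · exact hU

lemma exists_active_of_not_equiv {U V : AGame} (h : ¬ Equiv U V) :
    ∃ A : AGame, A.act = true ∧ PPos (add U A) ∧ ¬ PPos (add V A) := by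
  obtain ⟨Z, hZ⟩ := not_forall.1 h
  by_cases hUZ : PPos (add U Z)
  · obtain ⟨B, -, hVB, hUB⟩ :=
      exists_active_of_ppos_add hUZ fun hVZ => hZ (iff_of_true hUZ hVZ)
    exact exists_active_of_ppos_add hVB hUB
  · exact exists_active_of_ppos_add (by_contra fun hVZ => hZ (iff_of_false hUZ hVZ)) hUZ

lemma exists_active_ppos_add_ppos_add {U V : AGame}
    (hU : ∀ U' ∈ U.opts, ∃ A, A.act = true ∧ PPos (add U' A) ∧ ¬ PPos (add V A))
    (hV : ∀ V' ∈ V.opts, ∃ A, A.act = true ∧ PPos (add V' A) ∧ ¬ PPos (add U A)) :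
    ∃ X : AGame, X.act = true ∧ PPos (add U X) ∧ PPos (add V X) := by
  choose α hαact hαU hαV using hU
  choose β hβact hβV hβU using hV
  let X := mk (U.opts.attach.map (fun U' => α U'.1 U'.2) ++
    V.opts.attach.map (fun V' => β V'.1 V'.2)) true
  have hX : ∀ A ∈ X.opts, ¬ PPos (add U A) ∧ ¬ PPos (add V A) := by
    simp only [X, opts_mk, List.mem_append, List.mem_map, List.mem_attach, true_and]
    rintro _ (⟨⟨U', hU'⟩, rfl⟩ | ⟨⟨V', hV'⟩, rfl⟩)
    · exact ⟨not_ppos_of_mem_opts (by simp [hαact]) (add_mem_opts_add_left hU' _)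
        (hαU U' hU'), hαV U' hU'⟩
    · exact ⟨hβU V' hV',
        not_ppos_of_mem_opts (by simp [hβact]) (add_mem_opts_add_left hV' _) (hβV V' hV')⟩
  refine ⟨X, rfl, ppos_add_of_forall_exists rfl (fun U' hU' => ⟨α U' hU', ?_, hαU U' hU'⟩)
    (fun A hA => (hX A hA).1), ppos_add_of_forall_exists rfl
    (fun V' hV' => ⟨β V' hV', ?_, hβV V' hV'⟩) (fun A hA => (hX A hA).2)⟩
  · simp only [X, opts_mk, List.mem_append, List.mem_map, List.mem_attach, true_and]
    exact Or.inl ⟨⟨U', hU'⟩, rfl⟩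
  · simp only [X, opts_mk, List.mem_append, List.mem_map, List.mem_attach, true_and]
    exact Or.inr ⟨⟨V', hV'⟩, rfl⟩

lemma Equiv.exists_equiv_of_forall_not_equiv {G H H' : AGame} (h : Equiv G H)
    (hH' : H' ∈ H.opts) (hunc : ∀ G' ∈ G.opts, ¬ Equiv G' H') :
    ∃ H'' ∈ H'.opts, Equiv H'' G := by
  by_contra! hno
  obtain ⟨X, hX, hGX, hH'X⟩ := exists_active_ppos_add_ppos_add
    (fun G' hG' => exists_active_of_not_equiv (hunc G' hG'))
    (fun H'' hH'' => exists_active_of_not_equiv (hno H'' hH''))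
  exact not_ppos_of_mem_opts (by simp [hX]) (add_mem_opts_add_left hH' X) hH'X ((h X).1 hGX)

section Simplification

variable {G H X : AGame}

lemma ppos_add_of_covered (hcov : Covered G H) (hact : G.act = H.act)
    (ih : ∀ X' ∈ X.opts, PPos (add G X') ↔ PPos (add H X')) (h : PPos (add H X)) :
    PPos (add G X) := by
  cases hGX : (add G X).act
  · exact ppos_of_act_eq_false hGX
  have hHX : (add H X).act = true := by rwa [act_add, ← hact, ← act_add]
  refine ppos_of_forall_not_ppos fun Y hY hY' => ?_
  obtain ⟨G', hG', rfl⟩ | ⟨X', hX', rfl⟩ := mem_opts_add.1 hY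
  · obtain ⟨H', hH', hE⟩ := hcov G' hG'
    exact not_ppos_of_mem_opts hHX (add_mem_opts_add_left hH' X) ((hE X).1 hY') h
  · exact not_ppos_of_mem_opts hHX (add_mem_opts_add_right H hX') ((ih X' hX').1 hY') h

lemma ppos_add_of_reversible (hT : typ G = typ H)
    (hR : ∀ H' ∈ H.opts, (∀ G' ∈ G.opts, ¬ Equiv G' H') →
      ∃ H'' ∈ H'.opts, Equiv H'' G)
    (ih : ∀ X' ∈ X.opts, PPos (add G X') ↔ PPos (add H X')) (h : PPos (add G X)) :
    PPos (add H X) := by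
  obtain ⟨hact, hinact⟩ := typ_eq_iff.1 hT
  cases hHX : (add H X).act
  · exact ppos_of_act_eq_false hHX
  have hGX : (add G X).act = true := by rwa [act_add, hact, ← act_add]
  refine ppos_of_forall_not_ppos fun Y hY hY' => ?_
  obtain ⟨H', hH', rfl⟩ | ⟨X', hX', rfl⟩ := mem_opts_add.1 hY
  · by_cases hcov : ∃ G' ∈ G.opts, Equiv G' H'
    · obtain ⟨G', hG', hE⟩ := hcov
      exact not_ppos_of_mem_opts hGX (add_mem_opts_add_left hG' X) ((hE X).2 hY') h
    obtain ⟨H'', hH'', hE⟩ := hR H' hH' (by simpa using hcov)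
    -- The type condition rules out `H'` and `X` both inactive: `G` would then have an
    -- inactive option `G₀`, and `G₀ + X` would be a 𝒫-position reachable from `G + X`.
    have hH'X : (add H' X).act = true := by
      by_contra hoff
      simp only [act_add, Bool.or_eq_true, not_or, Bool.not_eq_true] at hoff hGX
      have hG : G.act = true := hGX.resolve_right (by simp [hoff.2])
      obtain ⟨G₀, hG₀, hG₀off⟩ := (hinact hG).2 ⟨H', hH', hoff.1⟩
      exact not_ppos_of_mem_opts (by simp [hG]) (add_mem_opts_add_left hG₀ X)
        (ppos_of_act_eq_false (by simp [hG₀off, hoff.2])) h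
    exact not_ppos_of_mem_opts hH'X (add_mem_opts_add_left hH'' X) ((hE X).2 h) hY'
  · exact not_ppos_of_mem_opts hGX (add_mem_opts_add_right G hX') ((ih X' hX').2 hY') h

theorem equiv_of_covered (hcov : Covered G H) (hT : typ G = typ H)
    (hR : ∀ H' ∈ H.opts, (∀ G' ∈ G.opts, ¬ Equiv G' H') →
      ∃ H'' ∈ H'.opts, Equiv H'' G) :
    Equiv G H := by
  intro X
  induction X using induction_on_opts with
  | ih X ih =>
    exact ⟨ppos_add_of_reversible hT hR ih, ppos_add_of_covered hcov (typ_eq_iff.1 hT).1 ih⟩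

end Simplification

end AGame

/-- Simplification Theorem. -/
theorem AGame.simplification (G H : AGame) (hcov : AGame.Covered G H) :
    AGame.Equiv G H ↔
      (AGame.typ G = AGame.typ H ∧
        ∀ H' ∈ H.opts, (∀ G' ∈ G.opts, ¬ AGame.Equiv G' H') →
          ∃ H'' ∈ H'.opts, AGame.Equiv H'' G) :=
  ⟨fun h => ⟨h.typ_eq, fun _ hH' hunc => h.exists_equiv_of_forall_not_equiv hH' hunc⟩,
    fun ⟨hT, hR⟩ => AGame.equiv_of_covered hcov hT hR⟩
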